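/- For every n and every integer r with 0 ≤ r ≤ n, let B(r) = {x ∈ F_2^n : |x| ≤ r} be the Hamming ball of radius r. Then the maximal adjacency eigenvalue of the induced subgraph satisfies λ_{B(r)} ≥ 2√(r(n−r)) − o(n) as n → ∞ (for r = r(n)); equivalently, for every ε > 0 there exists N such that for all n ≥ N and all 0 ≤ r ≤ n/2, λ_{B(r)} ≥ 2√(r(n−r)) − εn. -/

import Mathlib

open Finset Filter

noncomputable section

/-- The Hamming cube `F_2^n`. -/
abbrev Ham (n : ℕ) := Fin n → ZMod 2

/-- Average (expectation w.r.t. uniform measure) of a function on the cube. -/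
def avg {n : ℕ} (f : Ham n → ℝ) : ℝ := (∑ x, f x) / 2 ^ n

/-- Normalized inner product `⟨f,g⟩ = E (f·g)`. -/
def inn {n : ℕ} (f g : Ham n → ℝ) : ℝ := avg (fun x => f x * g x)

/-- The character `W_S(x) = (-1)^{⟨x,S⟩}`. -/
def chr {n : ℕ} (S x : Ham n) : ℝ := if (∑ i, x i * S i) = 0 then 1 else -1

/-- Fourier transform `f^(S) = E (f · W_S)`. -/
def ft {n : ℕ} (f : Ham n → ℝ) (S : Ham n) : ℝ := avg (fun x => f x * chr S x)

/-- Convolution `(f ∗ g)(x) = E_y f(y) g(x+y)`. -/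
def cnv {n : ℕ} (f g : Ham n → ℝ) (x : Ham n) : ℝ := avg (fun y => f y * g (x + y))

/-- Adjacency operator of the Hamming cube graph: `(Af)(x) = ∑_{y ∼ x} f(y)`. -/
def adjOp {n : ℕ} (f : Ham n → ℝ) (x : Ham n) : ℝ :=
  ∑ y, if hammingDist x y = 1 then f y else 0

/-- Characteristic function of a set. -/
def ind {n : ℕ} (C : Set (Ham n)) : Ham n → ℝ := C.indicator 1

/-- Maximal eigenvalue of the adjacency matrix of the subgraph induced on `B`,
expressed as the supremum of Rayleigh quotients of functions supported on `B`. -/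
def lambdaB {n : ℕ} (B : Set (Ham n)) : ℝ :=
  sSup {r | ∃ f : Ham n → ℝ, f ≠ 0 ∧ (∀ x, x ∉ B → f x = 0) ∧
    r = inn (adjOp f) f / inn f f}



/-! A radial function `f x = g |x|` is mapped by `A` to `k ↦ (n - k) g (k + 1) + k g (k - 1)`, so a
nonnegative `g`, supported on `[0, r]`, with `λ g ≤ (n - k) g (k + 1) + k g (k - 1)` pointwise
certifies `λ ≤ λ_{B(r)}`. On `[m, r]`, `m = r - W`, take `g k = sin ((k - m + 1) π / (W + 2)) t ^ k`
with `t = √(m / (n - r))`: the geometric weight makes both the up-degree and the down-degree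
contribute at least `√(m (n - r))`, and the sine is the Perron vector of a path with `W + 1`
vertices, whence `λ = 2 cos (π / (W + 2)) √((r - W) (n - r))`. As `√r ≤ √(r - W) + √W` and
`cos (π / (W + 2)) → 1`, fixing `W` large in terms of `ε` loses only `O(√(W n)) + ε n / 2`. -/

open Real

section Cube

variable {ι : Type*} [Fintype ι] [DecidableEq ι]

lemma hammingNorm_pi_single {β : Type*} [Zero β] [DecidableEq β] (i : ι) {b : β} (hb : b ≠ 0) :
    hammingNorm (Pi.single i b : ι → β) = 1 := by
  rw [hammingNorm, card_eq_one]
  exact ⟨i, by ext j; by_cases h : j = i <;> simp [h, hb]⟩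

lemma hammingNorm_eq_one_iff (z : ι → ZMod 2) : hammingNorm z = 1 ↔ ∃ i, z = Pi.single i 1 := by
  refine ⟨fun h => ?_, fun ⟨i, hz⟩ => hz ▸ hammingNorm_pi_single i one_ne_zero⟩
  obtain ⟨i, hi⟩ := card_eq_one.mp h
  refine ⟨i, funext fun j => ?_⟩
  have hj : z j ≠ 0 ↔ j = i := by simpa using congrArg (j ∈ ·) hi
  by_cases h : j = i
  · subst h
    rw [Pi.single_eq_same]
    exact Fin.eq_one_of_ne_zero _ (hj.mpr rfl)
  · simpa [h] using hj.not.mpr h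

lemma hammingDist_eq_one_iff (x y : ι → ZMod 2) :
    hammingDist x y = 1 ↔ ∃ i, y = x + Pi.single i 1 := by
  simp only [hammingDist_eq_hammingNorm, hammingNorm_eq_one_iff, neg_add_eq_iff_eq_add]

lemma sum_hammingDist_eq_one {M : Type*} [AddCommMonoid M] (x : ι → ZMod 2)
    (F : (ι → ZMod 2) → M) :
    (∑ y, if hammingDist x y = 1 then F y else 0) = ∑ i, F (x + Pi.single i 1) := by
  have hinj : Function.Injective fun i : ι => x + Pi.single i (1 : ZMod 2) := fun i j h => by
    by_contra hij
    simpa [hij] using congrFun (add_left_cancel h) i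
  rw [← sum_filter, ← sum_image fun i _ j _ h => hinj h]
  congr 1
  ext y
  simp only [mem_filter, mem_univ, true_and, mem_image, hammingDist_eq_one_iff]
  exact exists_congr fun i => eq_comm

lemma hammingNorm_add_single (x : ι → ZMod 2) (i : ι) :
    hammingNorm (x + Pi.single i 1) =
      if x i = 0 then hammingNorm x + 1 else hammingNorm x - 1 := by
  have hsupp : ∀ j, (x + Pi.single i 1 : ι → ZMod 2) j ≠ 0 ↔ (j = i ↔ x j = 0) := by
    intro j
    by_cases h : j = i
    · subst h; simp only [Pi.add_apply, Pi.single_eq_same, true_iff]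
      generalize x j = a; revert a; decide
    · simp [h]
  unfold hammingNorm
  split_ifs with h
  · rw [← card_insert_of_notMem (s := {j | x j ≠ 0}) (a := i) (by simp [h])]
    congr 1; ext j
    simp only [mem_filter, mem_univ, true_and, mem_insert, hsupp]
    by_cases hj : j = i <;> simp [hj, h]
  · rw [← card_erase_of_mem (s := {j | x j ≠ 0}) (a := i) (by simp [h])]
    congr 1; ext j
    simp only [mem_filter, mem_univ, true_and, mem_erase, hsupp]
    by_cases hj : j = i <;> simp [hj, h]

lemma sum_comp_hammingNorm_add_single {M : Type*} [AddCommMonoid M] (g : ℕ → M)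
    (x : ι → ZMod 2) :
    ∑ i, g (hammingNorm (x + Pi.single i 1)) =
      (Fintype.card ι - hammingNorm x) • g (hammingNorm x + 1) +
        hammingNorm x • g (hammingNorm x - 1) := by
  have hzero : #{i | x i = 0} = Fintype.card ι - hammingNorm x := by
    have := card_filter_add_card_filter_not (s := univ) (fun i => x i = 0)
    rw [card_univ] at this
    simp only [hammingNorm, ne_eq]
    omega
  simp only [hammingNorm_add_single, apply_ite g, sum_ite, sum_const, hzero]
  rfl

end Cube

section Spectral

variable {n : ℕ}

lemma adjOp_apply (f : Ham n → ℝ) (x : Ham n) : adjOp f x = ∑ i, f (x + Pi.single i 1) :=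
  sum_hammingDist_eq_one x f

lemma adjOp_comp_hammingNorm (g : ℕ → ℝ) (x : Ham n) :
    adjOp (fun y => g (hammingNorm y)) x =
      ((n - hammingNorm x : ℕ) : ℝ) * g (hammingNorm x + 1) +
        hammingNorm x * g (hammingNorm x - 1) := by
  rw [adjOp_apply, sum_comp_hammingNorm_add_single, Fintype.card_fin, nsmul_eq_mul, nsmul_eq_mul]

lemma inn_self_pos {f : Ham n → ℝ} (hf : f ≠ 0) : 0 < inn f f := by
  obtain ⟨x, hx⟩ := Function.ne_iff.mp hf
  exact div_pos (sum_pos' (fun y _ => mul_self_nonneg (f y))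
    ⟨x, mem_univ x, mul_self_pos.mpr hx⟩) (by positivity)

lemma inn_adjOp_le (f : Ham n → ℝ) : inn (adjOp f) f ≤ n * inn f f := by
  unfold inn avg
  rw [← mul_div_assoc]
  gcongr
  dsimp only
  have htranslate : ∀ i : Fin n, ∑ x, f (x + Pi.single i 1) ^ 2 = ∑ x, f x ^ 2 := fun i =>
    Fintype.sum_equiv (Equiv.addRight (Pi.single i 1)) _ _ fun _ => rfl
  calc ∑ x, adjOp f x * f x = ∑ i, ∑ x, f (x + Pi.single i 1) * f x := by
        simp only [adjOp_apply, sum_mul]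
        exact sum_comm
    _ ≤ ∑ i : Fin n, ∑ x, (f (x + Pi.single i 1) ^ 2 + f x ^ 2) / 2 := by
        gcongr with i _ x
        nlinarith [sq_nonneg (f (x + Pi.single i 1) - f x)]
    _ = ∑ _i : Fin n, ∑ x, f x * f x := by
        refine sum_congr rfl fun i _ => ?_
        rw [← sum_div, sum_add_distrib, htranslate]
        simp only [sq]
        ring
    _ = n * ∑ x, f x * f x := by simp

lemma le_lambdaB {B : Set (Ham n)} {f : Ham n → ℝ} (hf : f ≠ 0) (hB : ∀ x, x ∉ B → f x = 0)
    {c : ℝ} (h : c * inn f f ≤ inn (adjOp f) f) : c ≤ lambdaB B := by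
  unfold lambdaB
  have hbdd : BddAbove {r | ∃ f : Ham n → ℝ, f ≠ 0 ∧ (∀ x, x ∉ B → f x = 0) ∧
      r = inn (adjOp f) f / inn f f} := by
    refine ⟨n, ?_⟩
    rintro _ ⟨g, hg, -, rfl⟩
    exact (div_le_iff₀ (inn_self_pos hg)).mpr (inn_adjOp_le g)
  exact ((le_div_iff₀ (inn_self_pos hf)).mpr h).trans (le_csSup hbdd ⟨f, hf, hB, rfl⟩)

lemma exists_hammingNorm_eq {m : ℕ} (hm : m ≤ n) : ∃ x : Ham n, hammingNorm x = m :=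
  ⟨fun j => if (j : ℕ) < m then 1 else 0, by simp [hammingNorm, Fin.card_filter_val_lt, hm]⟩

lemma le_lambdaB_ball_of_radial {g : ℕ → ℝ} {c : ℝ} {r m : ℕ} (hg : ∀ k, 0 ≤ g k)
    (hgr : ∀ k, r < k → g k = 0) (hm : m ≤ n) (hgm : g m ≠ 0)
    (hsub : ∀ k ≤ n, c * g k ≤ ((n - k : ℕ) : ℝ) * g (k + 1) + k * g (k - 1)) :
    c ≤ lambdaB {x : Ham n | hammingNorm x ≤ r} := by
  obtain ⟨x₀, hx₀⟩ := exists_hammingNorm_eq hm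
  refine le_lambdaB (f := fun x => g (hammingNorm x))
    (Function.ne_iff.mpr ⟨x₀, by simpa [hx₀] using hgm⟩) (fun x hx => hgr _ (not_le.mp hx)) ?_
  unfold inn avg
  rw [← mul_div_assoc]
  gcongr
  rw [mul_sum]
  refine sum_le_sum fun x _ => ?_
  rw [adjOp_comp_hammingNorm, ← mul_assoc]
  have hx : hammingNorm x ≤ n := hammingNorm_le_card_fintype.trans_eq (Fintype.card_fin n)
  exact mul_le_mul_of_nonneg_right (hsub _ hx) (hg _)

lemma lambdaB_ball_nonneg (r : ℕ) : 0 ≤ lambdaB {x : Ham n | hammingNorm x ≤ r} := by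
  refine le_lambdaB_ball_of_radial (g := fun k => if k = 0 then 1 else 0) (m := 0)
    (fun k => by positivity) (fun k hk => if_neg (by omega)) (Nat.zero_le n) (by simp)
    (fun k _ => ?_)
  rw [zero_mul]
  positivity

end Spectral

section SineProfile

lemma sin_nat_mul_pi_div_nonneg {W j : ℕ} (hj : j ≤ W + 2) :
    0 ≤ sin (j * (π / (W + 2))) := by
  apply sin_nonneg_of_nonneg_of_le_pi (by positivity)
  calc (j : ℝ) * (π / (W + 2)) ≤ (W + 2) * (π / (W + 2)) := by gcongr; exact_mod_cast hj
    _ = π := by field_simp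

def sineProfile (m W : ℕ) (t : ℝ) (k : ℕ) : ℝ :=
  if m ≤ k ∧ k ≤ m + W then sin ((k - m + 1 : ℕ) * (π / (W + 2))) * t ^ k else 0

variable {m W j : ℕ} {t : ℝ}

lemma sineProfile_nonneg (ht : 0 ≤ t) (k : ℕ) : 0 ≤ sineProfile m W t k := by
  unfold sineProfile
  split_ifs
  · exact mul_nonneg (sin_nat_mul_pi_div_nonneg (by omega)) (pow_nonneg ht k)
  · exact le_rfl

lemma sineProfile_of_lt {k : ℕ} (hk : m + W < k) : sineProfile m W t k = 0 :=
  if_neg (by omega)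

lemma sineProfile_add (hj : j ≤ W) :
    sineProfile m W t (m + j) = sin ((j + 1 : ℕ) * (π / (W + 2))) * t ^ (m + j) := by
  rw [sineProfile, if_pos (by omega), Nat.add_sub_cancel_left]

lemma sineProfile_self_pos (ht : 0 < t) : 0 < sineProfile m W t m := by
  have h := sineProfile_add (m := m) (t := t) W.zero_le
  rw [add_zero, zero_add, Nat.cast_one, one_mul] at h
  rw [h]
  exact mul_pos (sin_pos_of_pos_of_lt_pi (by positivity)
    (div_lt_self pi_pos (by linarith [(W.cast_nonneg : (0 : ℝ) ≤ W)]))) (pow_pos ht _)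

-- Since `sin 0 = sin π = 0`, the profile continues the sine one step beyond each end of its support.

lemma sin_mul_pow_le_sineProfile_succ (ht : 0 ≤ t) (hj : j ≤ W) :
    sin ((j + 2 : ℕ) * (π / (W + 2))) * t ^ (m + j + 1) ≤ sineProfile m W t (m + j + 1) := by
  rcases hj.lt_or_eq with hj | rfl
  · rw [add_assoc, sineProfile_add hj]
  · rw [Nat.cast_add, Nat.cast_two, mul_div_cancel₀ _ (by positivity), sin_pi, zero_mul]
    exact sineProfile_nonneg ht _

lemma sin_mul_pow_le_sineProfile_pred (ht : 0 ≤ t) (hj : j ≤ W) :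
    sin (j * (π / (W + 2))) * t ^ (m + j - 1) ≤ sineProfile m W t (m + j - 1) := by
  rcases Nat.eq_zero_or_pos j with rfl | hj₀
  · rw [Nat.cast_zero, zero_mul, sin_zero, zero_mul]
    exact sineProfile_nonneg ht _
  · obtain ⟨i, rfl⟩ := Nat.exists_eq_add_of_lt hj₀
    rw [show m + (0 + i + 1) - 1 = m + i by omega, sineProfile_add (by omega)]
    simp

lemma sineProfile_subsolution {n : ℕ} {c : ℝ} (ht : 0 ≤ t)
    (hup : c ≤ ((n - (m + W) : ℕ) : ℝ) * t) (hdown : c * t ≤ m) (k : ℕ) :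
    2 * cos (π / (W + 2)) * c * sineProfile m W t k ≤
      ((n - k : ℕ) : ℝ) * sineProfile m W t (k + 1) + k * sineProfile m W t (k - 1) := by
  have hg := sineProfile_nonneg (m := m) (W := W) ht
  by_cases hk : m ≤ k ∧ k ≤ m + W
  swap
  · rw [sineProfile, if_neg hk, mul_zero]
    exact add_nonneg (mul_nonneg (Nat.cast_nonneg _) (hg _)) (mul_nonneg (Nat.cast_nonneg _) (hg _))
  obtain ⟨j, rfl⟩ := Nat.exists_eq_add_of_le hk.1
  have hjW : j ≤ W := by omega
  set θ : ℝ := π / (W + 2)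
  have hs₂ : 0 ≤ sin ((j + 2 : ℕ) * θ) := sin_nat_mul_pi_div_nonneg (by omega)
  have hs₀ : 0 ≤ sin (j * θ) := sin_nat_mul_pi_div_nonneg (by omega)
  have hup' : c * (sin ((j + 2 : ℕ) * θ) * t ^ (m + j)) ≤
      ((n - (m + j) : ℕ) : ℝ) * sineProfile m W t (m + j + 1) :=
    calc c * (sin ((j + 2 : ℕ) * θ) * t ^ (m + j))
        ≤ ((n - (m + j) : ℕ) : ℝ) * t * (sin ((j + 2 : ℕ) * θ) * t ^ (m + j)) := by
          gcongr
          exact hup.trans (by gcongr)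
      _ = ((n - (m + j) : ℕ) : ℝ) * (sin ((j + 2 : ℕ) * θ) * t ^ (m + j + 1)) := by ring
      _ ≤ _ := by gcongr; exact sin_mul_pow_le_sineProfile_succ ht hjW
  have hdown' : c * (sin (j * θ) * t ^ (m + j)) ≤
      ((m + j : ℕ) : ℝ) * sineProfile m W t (m + j - 1) := by
    rcases Nat.eq_zero_or_pos (m + j) with h | h
    · obtain ⟨rfl, rfl⟩ : m = 0 ∧ j = 0 := by omega
      simp
    obtain ⟨i, hi⟩ : ∃ i, m + j = i + 1 := ⟨m + j - 1, by omega⟩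
    calc c * (sin (j * θ) * t ^ (m + j)) = c * t * (sin (j * θ) * t ^ (m + j - 1)) := by
          rw [hi, Nat.add_sub_cancel, pow_succ]
          ring
      _ ≤ ((m + j : ℕ) : ℝ) * (sin (j * θ) * t ^ (m + j - 1)) := by
          gcongr
          exact hdown.trans (by gcongr; omega)
      _ ≤ _ := by gcongr; exact sin_mul_pow_le_sineProfile_pred ht hjW
  have hsin : sin ((j + 2 : ℕ) * θ) + sin (j * θ) = 2 * cos θ * sin ((j + 1 : ℕ) * θ) := by
    rw [sin_add_sin]
    push_cast
    ring_nf
  calc 2 * cos θ * c * sineProfile m W t (m + j)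
      = c * (sin ((j + 2 : ℕ) * θ) * t ^ (m + j)) + c * (sin (j * θ) * t ^ (m + j)) := by
        rw [sineProfile_add hjW, ← mul_add, ← add_mul, hsin]
        ring
    _ ≤ _ := add_le_add hup' hdown'

end SineProfile

lemma le_lambdaB_ball_add {n m W : ℕ} (hm : 0 < m) (h : m + W < n) :
    2 * cos (π / (W + 2)) * √(m * (n - (m + W) : ℕ)) ≤
      lambdaB {x : Ham n | hammingNorm x ≤ m + W} := by
  set d : ℝ := ((n - (m + W) : ℕ) : ℝ)
  have hd : 0 < d := Nat.cast_pos.mpr (by omega)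
  set t := √m / √d
  have ht : 0 < t := div_pos (sqrt_pos.mpr (Nat.cast_pos.mpr hm)) (sqrt_pos.mpr hd)
  have hup : √(m * d) = d * t := by
    rw [sqrt_mul (Nat.cast_nonneg m)]
    simp only [t]
    field_simp
    exact sq_sqrt hd.le
  have hdown : √(m * d) * t = m := by
    rw [sqrt_mul (Nat.cast_nonneg m)]
    simp only [t]
    field_simp
    exact sq_sqrt (Nat.cast_nonneg m)
  exact le_lambdaB_ball_of_radial (sineProfile_nonneg ht.le) (fun k hk => sineProfile_of_lt hk)
    (by omega) (sineProfile_self_pos ht).ne'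
    (fun k _ => sineProfile_subsolution ht.le hup.le hdown.le k)

lemma le_lambdaB_ball {n : ℕ} (W r : ℕ) (hr : r < n) :
    2 * cos (π / (W + 2)) * √((r - W : ℕ) * (n - r : ℕ)) ≤
      lambdaB {x : Ham n | hammingNorm x ≤ r} := by
  rcases lt_or_ge W r with h | h
  · obtain ⟨m, rfl⟩ := Nat.exists_eq_add_of_lt h
    rw [show W + m + 1 - W = m + 1 by omega, show W + m + 1 = m + 1 + W by omega]
    exact le_lambdaB_ball_add m.succ_pos (by omega)
  · rw [Nat.sub_eq_zero_of_le h, Nat.cast_zero, zero_mul, sqrt_zero, mul_zero]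
    exact lambdaB_ball_nonneg r

lemma sqrt_add_le_sqrt_add_sqrt {a b : ℝ} (ha : 0 ≤ a) (hb : 0 ≤ b) : √(a + b) ≤ √a + √b :=
  sqrt_le_iff.mpr ⟨by positivity, by
    nlinarith [sq_sqrt ha, sq_sqrt hb, mul_nonneg (sqrt_nonneg a) (sqrt_nonneg b)]⟩

lemma sqrt_mul_sub_le (r W n : ℕ) :
    √(r * (n - r : ℕ)) ≤ √((r - W : ℕ) * (n - r : ℕ)) + √(W * n) := by
  have hr : (r : ℝ) ≤ (r - W : ℕ) + W := by exact_mod_cast le_tsub_add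
  have hn : ((n - r : ℕ) : ℝ) ≤ n := by exact_mod_cast n.sub_le r
  calc √(r * (n - r : ℕ)) ≤ √((r - W : ℕ) * (n - r : ℕ) + W * n) := by
        gcongr
        nlinarith [(W.cast_nonneg : (0 : ℝ) ≤ W), ((n - r : ℕ).cast_nonneg : (0 : ℝ) ≤ (n - r : ℕ))]
    _ ≤ _ := sqrt_add_le_sqrt_add_sqrt (by positivity) (by positivity)

lemma exists_lt_cos_pi_div {δ : ℝ} (hδ : δ < 1) : ∃ W : ℕ, δ < cos (π / (W + 2)) := by
  have hθ : Tendsto (fun W : ℕ => π / ((W : ℝ) + 2)) atTop (nhds 0) :=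
    tendsto_const_nhds.div_atTop (tendsto_atTop_add_const_right _ 2 tendsto_natCast_atTop_atTop)
  have hcos := (continuous_cos.tendsto 0).comp hθ
  rw [cos_zero] at hcos
  exact (hcos.eventually (lt_mem_nhds hδ)).exists

/-- the maximal adjacency eigenvalue of the Hamming ball B(r) satisfies
lambda_{B(r)} >= 2 sqrt(r(n-r)) - o(n). -/
theorem stmt15 :
    ∀ ε > (0 : ℝ), ∃ N : ℕ, ∀ n ≥ N, ∀ r : ℕ, 2 * r ≤ n →
      lambdaB {x : Ham n | hammingNorm x ≤ r} ≥
        2 * Real.sqrt ((r : ℝ) * ((n : ℝ) - r)) - ε * n := by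
  intro ε hε
  obtain ⟨W, hW⟩ := exists_lt_cos_pi_div (show 1 - ε / 2 < 1 by linarith)
  obtain ⟨N, hN⟩ := exists_nat_ge (16 * W / ε ^ 2)
  refine ⟨N + 1, fun n hn r hr => ?_⟩
  have hWε : (16 * W : ℝ) ≤ ε ^ 2 * n := by
    rw [div_le_iff₀ (by positivity)] at hN
    nlinarith [(show (N : ℝ) ≤ n by exact_mod_cast (N.le_succ.trans hn))]
  have hb : √((r - W : ℕ) * (n - r : ℕ)) ≤ n / 2 :=
    calc √((r - W : ℕ) * (n - r : ℕ)) ≤ √(r * (n - r : ℕ)) := by gcongr; exact_mod_cast r.sub_le W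
      _ ≤ n / 2 := sqrt_le_iff.mpr ⟨by positivity, by
          rw [Nat.cast_sub (by omega : r ≤ n)]
          nlinarith [sq_nonneg ((n : ℝ) - 2 * r)]⟩
  have hsplit := sqrt_mul_sub_le r W n
  have hWn : √(W * n) ≤ ε * n / 4 :=
    (sqrt_le_left (by positivity)).mpr (by nlinarith [(n.cast_nonneg : (0 : ℝ) ≤ n)])
  rw [← Nat.cast_sub (by omega : r ≤ n), ge_iff_le]
  calc 2 * √(r * (n - r : ℕ)) - ε * n ≤ 2 * (1 - ε / 2) * √((r - W : ℕ) * (n - r : ℕ)) := by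
        linarith [mul_le_mul_of_nonneg_left hb hε.le]
    _ ≤ 2 * cos (π / (W + 2)) * √((r - W : ℕ) * (n - r : ℕ)) := by gcongr
    _ ≤ _ := le_lambdaB_ball W r (by omega)
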